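/- arXiv:1501.00813 — 4 statements merged into one kernel-verified Lean document; each statement's English description precedes it below -/
import Mathlib

section
/- Let A and B be the two parts of the complete bipartite graph K_{m,m+1} with |A| = m, |B| = m+1, and fix a linear order b_1 < b_2 < ... < b_{m+1} of B. For each permutation ρ of A, define the Hamilton path P_ρ = b_1, ρ(a_1), b_2, ρ(a_2), ..., ρ(a_m), b_{m+1} (where a_1,...,a_m is a fixed order of A). Then for any two distinct permutations ρ ≠ σ of A, the union of P_ρ and P_σ contains a cycle of length 4. -/
/-- The edge set of the Hamilton path `b₁, ρ(a₁), b₂, ρ(a₂), …, ρ(aₘ), b_{m+1}` of the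
complete bipartite graph `K_{m,m+1}` with parts `A = Fin m` (left) and `B = Fin (m+1)`
(right), associated with the permutation `ρ` of `A`. -/
def bipPathEdges (m : ℕ) (ρ : Equiv.Perm (Fin m)) : Set (Sym2 (Fin m ⊕ Fin (m + 1))) :=
  {e | ∃ i : Fin m,
    e = s(Sum.inr (i.castSucc), Sum.inl (ρ i)) ∨ e = s(Sum.inl (ρ i), Sum.inr i.succ)}

/-- For any two distinct permutations `ρ ≠ σ` of `A`, the union of the Hamilton paths
`P_ρ` and `P_σ` of `K_{m,m+1}` contains a cycle of length four. -/
theorem union_of_bipartite_paths_has_four_cycle (m : ℕ) (ρ σ : Equiv.Perm (Fin m))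
    (hne : ρ ≠ σ) :
    ∃ (a b : Fin m) (x y : Fin (m + 1)), a ≠ b ∧ x ≠ y ∧
      s(Sum.inl a, Sum.inr x) ∈ bipPathEdges m ρ ∪ bipPathEdges m σ ∧
      s(Sum.inr x, Sum.inl b) ∈ bipPathEdges m ρ ∪ bipPathEdges m σ ∧
      s(Sum.inl b, Sum.inr y) ∈ bipPathEdges m ρ ∪ bipPathEdges m σ ∧
      s(Sum.inr y, Sum.inl a) ∈ bipPathEdges m ρ ∪ bipPathEdges m σ := by
  obtain ⟨i, hi⟩ : ∃ i, ρ i ≠ σ i := by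
    by_contra h
    push_neg at h
    exact hne (Equiv.ext h)
  refine ⟨ρ i, σ i, i.castSucc, i.succ, hi, ?_, ?_, ?_, ?_, ?_⟩
  · intro h
    exact absurd (Fin.val_eq_of_eq h) (by simp)
  · exact Or.inl ⟨i, Or.inl (Sym2.eq_swap)⟩
  · exact Or.inr ⟨i, Or.inl rfl⟩
  · exact Or.inr ⟨i, Or.inr rfl⟩
  · exact Or.inl ⟨i, Or.inr (Sym2.eq_swap)⟩
end

section
/- The maximum cardinality M̂(n,4) of a family of Hamilton paths in K_n such that the union of any two members contains a 4-cycle formed as the union of a subpath from each path satisfies M̂(n,4) ≥ ⌊n/2⌋!. -/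
/-- The edge set of the Hamilton path of `K_n` visiting the vertices in the order
`τ 0, τ 1, …, τ (n-1)`. -/
def pathEdges (n : ℕ) (τ : Equiv.Perm (Fin n)) : Set (Sym2 (Fin n)) :=
  {e | ∃ i : ℕ, ∃ h : i + 1 < n, e = s(τ ⟨i, by omega⟩, τ ⟨i + 1, h⟩)}

/-- The edges of the subpath of the Hamilton path `τ` consisting of the (at most `k`)
consecutive edges starting at position `i`. -/
def consecEdges (n : ℕ) (τ : Equiv.Perm (Fin n)) (i k : ℕ) : Set (Sym2 (Fin n)) :=
  {e | ∃ j : ℕ, ∃ h : j + 1 < n, i ≤ j ∧ j < i + k ∧ e = s(τ ⟨j, by omega⟩, τ ⟨j + 1, h⟩)}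

/-- `C` is the edge set of a cycle of length four. -/
def IsFourCycle (n : ℕ) (C : Set (Sym2 (Fin n))) : Prop :=
  ∃ a b c d : Fin n, a ≠ b ∧ a ≠ c ∧ a ≠ d ∧ b ≠ c ∧ b ≠ d ∧ c ≠ d ∧
    C = {s(a, b), s(b, c), s(c, d), s(d, a)}

/-- The union of the Hamilton paths `τ` and `φ` contains a 4-cycle which is the union of
a subpath (a set of consecutive edges) of `τ` and a subpath of `φ`. -/
def TwoPartFourCycle (n : ℕ) (τ φ : Equiv.Perm (Fin n)) : Prop :=
  ∃ C : Set (Sym2 (Fin n)), IsFourCycle n C ∧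
    ∃ i k j l : ℕ, C = consecEdges n τ i k ∪ consecEdges n φ j l


/-- Interleaving embedding: position `2j` holds vertex `j`, position `2j+1` holds
vertex `(n - n/2) + σ j`. -/
def embFun (n : ℕ) (σ : Equiv.Perm (Fin (n / 2))) (p : Fin n) : Fin n :=
  if h : p.val % 2 = 1 then
    ⟨(n - n / 2) + (σ ⟨p.val / 2, by have := p.isLt; omega⟩).val,
      by have := (σ ⟨p.val / 2, by have := p.isLt; omega⟩).isLt; omega⟩
  else ⟨p.val / 2, by have := p.isLt; omega⟩

lemma embFun_injective (n : ℕ) (σ : Equiv.Perm (Fin (n / 2))) :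
    Function.Injective (embFun n σ) := by
  intro p q hpq
  unfold embFun at hpq
  split_ifs at hpq with h1 h2 h2 <;>
    have hv := congrArg Fin.val hpq <;> simp only at hv
  · have hσ : σ ⟨p.val / 2, by have := p.isLt; omega⟩ = σ ⟨q.val / 2, by have := q.isLt; omega⟩ :=
      Fin.ext (by omega)
    have := σ.injective hσ
    have := congrArg Fin.val this
    simp only at this
    exact Fin.ext (by omega)
  · exfalso
    have := (σ ⟨p.val / 2, by have := p.isLt; omega⟩).isLt
    have := q.isLt
    omega
  · exfalso
    have := (σ ⟨q.val / 2, by have := q.isLt; omega⟩).isLt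
    have := p.isLt
    omega
  · exact Fin.ext (by omega)

noncomputable def emb (n : ℕ) (σ : Equiv.Perm (Fin (n / 2))) : Equiv.Perm (Fin n) :=
  Equiv.ofBijective (embFun n σ) (Finite.injective_iff_bijective.mp (embFun_injective n σ))

lemma emb_even_val (n : ℕ) (σ : Equiv.Perm (Fin (n / 2))) (j : ℕ) (hj : 2 * j < n) :
    ((emb n σ) ⟨2 * j, hj⟩).val = j := by
  simp only [emb, Equiv.ofBijective_apply, embFun]
  rw [dif_neg (by omega)]
  simp only
  omega

lemma emb_odd_val (n : ℕ) (σ : Equiv.Perm (Fin (n / 2))) (j : ℕ) (hj : 2 * j + 1 < n) :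
    ((emb n σ) ⟨2 * j + 1, hj⟩).val = (n - n / 2) + (σ ⟨j, by omega⟩).val := by
  simp only [emb, Equiv.ofBijective_apply, embFun]
  rw [dif_pos (by omega)]
  simp only
  have hx : (2 * j + 1) / 2 = j := by omega
  simp only [hx]

lemma consec_pair (n : ℕ) (τ : Equiv.Perm (Fin n)) (i : ℕ) (h : i + 2 < n) :
    consecEdges n τ i 2 =
      {s(τ ⟨i, by omega⟩, τ ⟨i + 1, by omega⟩), s(τ ⟨i + 1, by omega⟩, τ ⟨i + 2, h⟩)} := by
  ext e
  simp only [consecEdges, Set.mem_setOf_eq, Set.mem_insert_iff, Set.mem_singleton_iff]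
  constructor
  · rintro ⟨j, hj, h1, h2, rfl⟩
    have hj' : j = i ∨ j = i + 1 := by omega
    rcases hj' with rfl | rfl
    · left; rfl
    · right; rfl
  · rintro (rfl | rfl)
    · exact ⟨i, by omega, le_refl _, by omega, rfl⟩
    · exact ⟨i + 1, by omega, by omega, by omega, rfl⟩

lemma diff_index {m : ℕ} (σ π : Equiv.Perm (Fin m)) (hne : σ ≠ π) :
    ∃ i : Fin m, i.val + 2 ≤ m ∧ σ i ≠ π i := by
  by_contra hc
  push_neg at hc
  apply hne
  ext i
  by_cases hi : i.val + 2 ≤ m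
  · exact congrArg Fin.val (hc i hi)
  · -- i is the last index
    have hm : 0 < m := i.pos
    set k := π.symm (σ i) with hk
    have hπk : π k = σ i := π.apply_symm_apply _
    by_cases hki : k = i
    · rw [hki] at hπk; rw [← hπk]
    · have hk2 : k.val + 2 ≤ m := by
        have := k.isLt; have := i.isLt
        by_contra hkk
        exact hki (Fin.ext (by omega))
      have h5 := hc k hk2
      rw [← h5] at hπk
      have := σ.injective hπk
      exact absurd this hki

set_option maxHeartbeats 1000000 in
/-- `M̂(n,4) ≥ ⌊n/2⌋!` : there is a family of at least `⌊n/2⌋!` Hamilton paths of `K_n`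
such that the union of any two of them contains a two-part 4-cycle. -/
theorem lower_bound_two_part_four_cycle_family (n : ℕ) :
    ∃ F : Finset (Equiv.Perm (Fin n)),
      Nat.factorial (n / 2) ≤ F.card ∧
      ∀ τ ∈ F, ∀ φ ∈ F, τ ≠ φ → TwoPartFourCycle n τ φ := by
  by_cases hn : 4 ≤ n
  · -- main case
    have hm2 : 2 ≤ n / 2 := by omega
    have hemb_inj : Function.Injective (emb n) := by
      intro σ π h
      ext j
      have hj : 2 * j.val + 1 < n := by have := j.isLt; omega
      have h1 := emb_odd_val n σ j.val hj
      have h2 := emb_odd_val n π j.val hj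
      rw [h] at h1
      have hjj : (⟨j.val, by omega⟩ : Fin (n / 2)) = j := Fin.ext rfl
      rw [hjj] at h1 h2
      omega
    refine ⟨Finset.image (emb n) Finset.univ, ?_, ?_⟩
    · rw [Finset.card_image_of_injective _ hemb_inj, Finset.card_univ, Fintype.card_perm,
        Fintype.card_fin]
    · intro τ hτ φ hφ hne
      simp only [Finset.mem_image, Finset.mem_univ, true_and] at hτ hφ
      obtain ⟨σ, rfl⟩ := hτ
      obtain ⟨π, rfl⟩ := hφ
      have hσπ : σ ≠ π := fun h => hne (by rw [h])
      obtain ⟨i, hi2, hiv⟩ := diff_index σ π hσπ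
      have hin : 2 * i.val + 2 < n := by omega
      set a : Fin n := emb n σ ⟨2 * i.val, by omega⟩ with ha
      set b : Fin n := emb n σ ⟨2 * i.val + 1, by omega⟩ with hb
      set c : Fin n := emb n σ ⟨2 * i.val + 2, by omega⟩ with hc
      set d : Fin n := emb n π ⟨2 * i.val + 1, by omega⟩ with hd
      have hav : a.val = i.val := emb_even_val n σ i.val (by omega)
      have hcv : c.val = i.val + 1 := by
        have : (⟨2 * i.val + 2, hin⟩ : Fin n) = ⟨2 * (i.val + 1), by omega⟩ := Fin.ext (by show 2 * i.val + 2 = 2 * (i.val + 1); omega)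
        rw [hc, this]
        exact emb_even_val n σ (i.val + 1) (by omega)
      have hii : (⟨i.val, by omega⟩ : Fin (n / 2)) = i := Fin.ext rfl
      have hbv : b.val = (n - n / 2) + (σ i).val := by
        rw [hb, emb_odd_val n σ i.val (by omega), hii]
      have hdv : d.val = (n - n / 2) + (π i).val := by
        rw [hd, emb_odd_val n π i.val (by omega), hii]
      have hπa : emb n π ⟨2 * i.val, by omega⟩ = a := by
        apply Fin.ext
        rw [emb_even_val n π i.val (by omega), hav]
      have hπc : emb n π ⟨2 * i.val + 2, hin⟩ = c := by
        apply Fin.ext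
        have : (⟨2 * i.val + 2, hin⟩ : Fin n) = ⟨2 * (i.val + 1), by omega⟩ := Fin.ext (by show 2 * i.val + 2 = 2 * (i.val + 1); omega)
        rw [this, emb_even_val n π (i.val + 1) (by omega), hcv]
      have hσlt : (σ i).val < n / 2 := (σ i).isLt
      have hπlt : (π i).val < n / 2 := (π i).isLt
      have hσπv : (σ i).val ≠ (π i).val := fun h => hiv (Fin.ext h)
      refine ⟨{s(a, b), s(b, c), s(c, d), s(d, a)},
        ⟨a, b, c, d, ?_, ?_, ?_, ?_, ?_, ?_, rfl⟩,
        2 * i.val, 2, 2 * i.val, 2, ?_⟩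
      · exact fun h => by have := congrArg Fin.val h; omega
      · exact fun h => by have := congrArg Fin.val h; omega
      · exact fun h => by have := congrArg Fin.val h; omega
      · exact fun h => by have := congrArg Fin.val h; omega
      · exact fun h => by have := congrArg Fin.val h; omega
      · exact fun h => by have := congrArg Fin.val h; omega
      · rw [consec_pair n (emb n σ) (2 * i.val) hin, consec_pair n (emb n π) (2 * i.val) hin]
        rw [hπa, hπc, ← ha, ← hb, ← hc, ← hd]
        ext e
        simp only [Set.mem_insert_iff, Set.mem_singleton_iff, Set.mem_union]
        constructor
        · rintro (rfl | rfl | rfl | rfl)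
          · tauto
          · tauto
          · right; right; rw [Sym2.eq_swap]
          · right; left; rw [Sym2.eq_swap]
        · rintro ((rfl | rfl) | (rfl | rfl))
          · tauto
          · tauto
          · right; right; right; rw [Sym2.eq_swap]
          · right; right; left; rw [Sym2.eq_swap]
  · -- small n
    refine ⟨{1}, ?_, ?_⟩
    · have h1 : n / 2 = 0 ∨ n / 2 = 1 := by omega
      rcases h1 with h1 | h1 <;> simp [h1, Nat.factorial]
    · intro τ hτ φ hφ hne
      simp only [Finset.mem_singleton] at hτ hφ
      exact absurd (hτ.trans hφ.symm) hne
end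

section
/- For n a multiple of 6, the maximum cardinality M̂(n,4) of a family of Hamilton paths in K_n whose pairwise unions each contain a two-part 4-cycle satisfies M̂(n,4) ≤ n!/((n/6)!)^3. -/
namespace TwoPartAux

def eqv (m : ℕ) : Fin (6 * m) ≃ Fin 6 × Fin m where
  toFun p := (⟨p.val % 6, Nat.mod_lt _ (by omega)⟩, ⟨p.val / 6, by have := p.isLt; omega⟩)
  invFun su := ⟨6 * su.2.val + su.1.val, by have := su.1.isLt; have := su.2.isLt; omega⟩
  left_inv p := by apply Fin.val_injective; simp only []; omega
  right_inv su := by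
    refine Prod.ext ?_ ?_ <;> apply Fin.val_injective <;> simp only [] <;> omega

def inner (m : ℕ) (g : Fin 3 → Equiv.Perm (Fin m)) : Equiv.Perm (Fin 6 × Fin m) :=
  Equiv.prodCongrRight (fun s => g ⟨s.val / 2, by have := s.isLt; omega⟩)

def Phi (m : ℕ) : (Fin 3 → Equiv.Perm (Fin m)) →* Equiv.Perm (Fin (6 * m)) where
  toFun g := (eqv m).trans ((inner m g).trans (eqv m).symm)
  map_one' := by ext p; simp [inner, Equiv.prodCongrRight]
  map_mul' g g' := by ext p; simp [inner, Equiv.prodCongrRight]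

lemma phi_val (m : ℕ) (g : Fin 3 → Equiv.Perm (Fin m)) (p : Fin (6 * m)) :
    (Phi m g p).val =
      6 * (g ⟨p.val % 6 / 2, by omega⟩ ⟨p.val / 6, by have := p.isLt; omega⟩).val
        + p.val % 6 := rfl

lemma phi_injective (m : ℕ) : Function.Injective (Phi m) := by
  intro g g' h
  funext r
  apply Equiv.ext
  intro u
  have hp : 6 * u.val + 2 * r.val < 6 * m := by
    have := u.isLt; have := r.isLt; omega
  set p : Fin (6 * m) := ⟨6 * u.val + 2 * r.val, hp⟩ with hpdef
  have hpv : p.val = 6 * u.val + 2 * r.val := rfl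
  have h1 := phi_val m g p
  have h2 := phi_val m g' p
  rw [h] at h1
  have hidx1 : (⟨p.val % 6 / 2, by omega⟩ : Fin 3) = r := by
    apply Fin.val_injective; show p.val % 6 / 2 = r.val; have := r.isLt; omega
  have hidx2 : (⟨p.val / 6, by have := p.isLt; omega⟩ : Fin m) = u := by
    apply Fin.val_injective; show p.val / 6 = u.val; have := r.isLt; omega
  rw [hidx1, hidx2] at h1 h2
  apply Fin.val_injective
  omega

def Nk (a b k : ℕ) : Prop := a + k = b ∨ b + k = a

def Bad (n : ℕ) (f : Equiv.Perm (Fin n)) : Prop :=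
  ∃ p q : Fin n,
    (Nk p.val q.val 1 ∧ Nk (f p).val (f q).val 3) ∨
    (Nk p.val q.val 3 ∧ Nk (f p).val (f q).val 1) ∨
    (Nk p.val q.val 2 ∧ Nk (f p).val (f q).val 2 ∧
      ∀ r : Fin n, 2 * r.val = p.val + q.val →
        (f p).val + (f q).val ≠ 2 * (f r).val)

lemma safe22' (m : ℕ) (g : Fin 3 → Equiv.Perm (Fin m)) (p q r : Fin (6 * m))
    (h2 : p.val + 2 = q.val) (hr : r.val = p.val + 1)
    (hf2 : Nk (Phi m g p).val (Phi m g q).val 2) :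
    (Phi m g p).val + (Phi m g q).val = 2 * (Phi m g r).val := by
  rcases Nat.even_or_odd (p.val % 6) with ⟨t, ht⟩ | ⟨t, ht⟩
  · -- r has same g-index and block as p
    have hidx : (⟨r.val % 6 / 2, by omega⟩ : Fin 3) = ⟨p.val % 6 / 2, by omega⟩ := by
      apply Fin.val_injective; show r.val % 6 / 2 = p.val % 6 / 2; omega
    have hblk : (⟨r.val / 6, by have := r.isLt; omega⟩ : Fin m)
        = ⟨p.val / 6, by have := p.isLt; omega⟩ := by
      apply Fin.val_injective; show r.val / 6 = p.val / 6; omega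
    have hp := phi_val m g p
    have hq := phi_val m g q
    have hrv := phi_val m g r
    rw [hidx, hblk] at hrv
    unfold Nk at hf2
    omega
  · -- r has same g-index and block as q
    have hidx : (⟨r.val % 6 / 2, by omega⟩ : Fin 3) = ⟨q.val % 6 / 2, by omega⟩ := by
      apply Fin.val_injective; show r.val % 6 / 2 = q.val % 6 / 2; omega
    have hblk : (⟨r.val / 6, by have := r.isLt; omega⟩ : Fin m)
        = ⟨q.val / 6, by have := q.isLt; omega⟩ := by
      apply Fin.val_injective; show r.val / 6 = q.val / 6; omega
    have hp := phi_val m g p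
    have hq := phi_val m g q
    have hrv := phi_val m g r
    rw [hidx, hblk] at hrv
    unfold Nk at hf2
    omega

lemma safe22 (m : ℕ) (g : Fin 3 → Equiv.Perm (Fin m)) (p q : Fin (6 * m))
    (h2 : p.val + 2 = q.val)
    (hf2 : Nk (Phi m g p).val (Phi m g q).val 2) :
    ∃ r : Fin (6 * m), 2 * r.val = p.val + q.val ∧
      (Phi m g p).val + (Phi m g q).val = 2 * (Phi m g r).val := by
  have hrlt : p.val + 1 < 6 * m := by have := q.isLt; omega
  exact ⟨⟨p.val + 1, hrlt⟩, by show 2 * (p.val + 1) = _; omega,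
    safe22' m g p q _ h2 rfl hf2⟩

lemma safe (m : ℕ) (g : Fin 3 → Equiv.Perm (Fin m)) : ¬ Bad (6 * m) (Phi m g) := by
  rintro ⟨p, q, hc⟩
  have hp := phi_val m g p
  have hq := phi_val m g q
  rcases hc with ⟨h1, h2⟩ | ⟨h1, h2⟩ | ⟨h1, h2, hnd⟩
  · unfold Nk at h1 h2; omega
  · unfold Nk at h1 h2; omega
  · unfold Nk at h1
    rcases h1 with h1 | h1
    · obtain ⟨r, hr1, hr2⟩ := safe22 m g p q h1 h2
      exact hnd r hr1 hr2
    · obtain ⟨r, hr1, hr2⟩ := safe22 m g q p h1 (by unfold Nk at h2 ⊢; omega)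
      exact hnd r (by omega) (by omega)




lemma mem_consec_pos {n : ℕ} {π : Equiv.Perm (Fin n)} {i k : ℕ} {u v : Fin n}
    (h : s(u,v) ∈ consecEdges n π i k) :
    ∃ x : ℕ, x + 1 < n ∧ i ≤ x ∧ x < i + k ∧
      (((π.symm u).val = x ∧ (π.symm v).val = x + 1) ∨
       ((π.symm v).val = x ∧ (π.symm u).val = x + 1)) := by
  obtain ⟨j, hj, hij, hjk, he⟩ := h
  refine ⟨j, hj, hij, hjk, ?_⟩
  rcases Sym2.eq_iff.mp he with ⟨h1, h2⟩ | ⟨h1, h2⟩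
  · exact Or.inl ⟨by rw [h1]; simp, by rw [h2]; simp⟩
  · exact Or.inr ⟨by rw [h2]; simp, by rw [h1]; simp⟩

lemma padjN {n : ℕ} {π : Equiv.Perm (Fin n)} {i k : ℕ} {u v : Fin n}
    (h : s(u,v) ∈ consecEdges n π i k) : Nk (π.symm u).val (π.symm v).val 1 := by
  obtain ⟨x, _, _, _, h | h⟩ := mem_consec_pos h
  · exact Or.inl (by omega)
  · exact Or.inr (by omega)

lemma edge_pos {n : ℕ} {π : Equiv.Perm (Fin n)} {u v : Fin n} {y : ℕ} {hy : y < n}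
    {hy1 : y + 1 < n} (h : s(π ⟨y, hy⟩, π ⟨y + 1, hy1⟩) = s(u, v)) :
    ((π.symm u).val = y ∧ (π.symm v).val = y + 1) ∨
    ((π.symm v).val = y ∧ (π.symm u).val = y + 1) := by
  rcases Sym2.eq_iff.mp h with ⟨h1, h2⟩ | ⟨h1, h2⟩
  · exact Or.inl ⟨by rw [← h1]; simp, by rw [← h2]; simp⟩
  · exact Or.inr ⟨by rw [← h1]; simp, by rw [← h2]; simp⟩

lemma interval_helper {n : ℕ} {π : Equiv.Perm (Fin n)} {i k : ℕ} {a b c d : Fin n}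
    (hPAC : (π.symm a).val ≠ (π.symm c).val)
    (hPAD : (π.symm a).val ≠ (π.symm d).val)
    (hPBC : (π.symm b).val ≠ (π.symm c).val)
    (hPBD : (π.symm b).val ≠ (π.symm d).val)
    (h1 : s(a,b) ∈ consecEdges n π i k) (h2 : s(c,d) ∈ consecEdges n π i k)
    (hsub : ∀ e ∈ consecEdges n π i k,
      e = s(a,b) ∨ e = s(b,c) ∨ e = s(c,d) ∨ e = s(d,a)) :
    Nk (π.symm b).val (π.symm c).val 1 ∨ Nk (π.symm d).val (π.symm a).val 1 := by
  obtain ⟨x1, hx1n, hx1i, hx1k, hx1⟩ := mem_consec_pos h1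
  obtain ⟨x3, hx3n, hx3i, hx3k, hx3⟩ := mem_consec_pos h2
  have hsep : x1 + 2 ≤ x3 ∨ x3 + 2 ≤ x1 := by omega
  rcases hsep with hs | hs
  · have hy1 : (x1 + 1) + 1 < n := by omega
    have hy : x1 + 1 < n := by omega
    have hmem : s(π ⟨x1 + 1, hy⟩, π ⟨(x1 + 1) + 1, hy1⟩) ∈ consecEdges n π i k :=
      ⟨x1 + 1, hy1, by omega, by omega, rfl⟩
    rcases hsub _ hmem with h | h | h | h
    · rcases edge_pos h with ⟨e1, e2⟩ | ⟨e1, e2⟩ <;> omega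
    · rcases edge_pos h with ⟨e1, e2⟩ | ⟨e1, e2⟩ <;> exact Or.inl (by unfold Nk; omega)
    · rcases edge_pos h with ⟨e1, e2⟩ | ⟨e1, e2⟩ <;> omega
    · rcases edge_pos h with ⟨e1, e2⟩ | ⟨e1, e2⟩ <;> exact Or.inr (by unfold Nk; omega)
  · have hy1 : (x3 + 1) + 1 < n := by omega
    have hy : x3 + 1 < n := by omega
    have hmem : s(π ⟨x3 + 1, hy⟩, π ⟨(x3 + 1) + 1, hy1⟩) ∈ consecEdges n π i k :=
      ⟨x3 + 1, hy1, by omega, by omega, rfl⟩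
    rcases hsub _ hmem with h | h | h | h
    · rcases edge_pos h with ⟨e1, e2⟩ | ⟨e1, e2⟩ <;> omega
    · rcases edge_pos h with ⟨e1, e2⟩ | ⟨e1, e2⟩ <;> exact Or.inl (by unfold Nk; omega)
    · rcases edge_pos h with ⟨e1, e2⟩ | ⟨e1, e2⟩ <;> omega
    · rcases edge_pos h with ⟨e1, e2⟩ | ⟨e1, e2⟩ <;> exact Or.inr (by unfold Nk; omega)




lemma cyc_contra {x y z w : ℕ} (h1 : Nk x y 1) (h2 : Nk y z 1) (h3 : Nk z w 1)
    (h4 : Nk w x 1) (d1 : x ≠ z) (d2 : y ≠ w) : False := by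
  unfold Nk at h1 h2 h3 h4; omega

lemma fval {n : ℕ} (τ φ : Equiv.Perm (Fin n)) (u : Fin n) :
    (φ⁻¹ * τ) (τ.symm u) = φ.symm u := by
  rw [Equiv.Perm.mul_apply, Equiv.apply_symm_apply]; rfl

/-- three consecutive `τ`-edges `u-v-w-z` plus a `φ`-edge `(z,u)` give a bad pair. -/
lemma case31 {n : ℕ} (τ φ : Equiv.Perm (Fin n)) (u v w z : Fin n)
    (n1 : Nk (τ.symm u).val (τ.symm v).val 1)
    (n2 : Nk (τ.symm v).val (τ.symm w).val 1)
    (n3 : Nk (τ.symm w).val (τ.symm z).val 1)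
    (q : Nk (φ.symm z).val (φ.symm u).val 1)
    (d1 : (τ.symm u).val ≠ (τ.symm w).val)
    (d2 : (τ.symm u).val ≠ (τ.symm z).val)
    (d3 : (τ.symm v).val ≠ (τ.symm z).val) :
    Bad n (φ⁻¹ * τ) := by
  refine ⟨τ.symm u, τ.symm z, Or.inr (Or.inl ⟨?_, ?_⟩)⟩
  · unfold Nk at n1 n2 n3 ⊢; omega
  · rw [fval, fval]; unfold Nk at q ⊢; omega

/-- a `τ`-edge `(u,v)` plus three consecutive `φ`-edges `v-w-z-u` give a bad pair. -/
lemma case13 {n : ℕ} (τ φ : Equiv.Perm (Fin n)) (u v w z : Fin n)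
    (p : Nk (τ.symm u).val (τ.symm v).val 1)
    (q1 : Nk (φ.symm v).val (φ.symm w).val 1)
    (q2 : Nk (φ.symm w).val (φ.symm z).val 1)
    (q3 : Nk (φ.symm z).val (φ.symm u).val 1)
    (d1 : (φ.symm v).val ≠ (φ.symm z).val)
    (d2 : (φ.symm w).val ≠ (φ.symm u).val)
    (d3 : (φ.symm v).val ≠ (φ.symm u).val) :
    Bad n (φ⁻¹ * τ) := by
  refine ⟨τ.symm u, τ.symm v, Or.inl ⟨?_, ?_⟩⟩
  · unfold Nk at p ⊢; omega
  · rw [fval, fval]; unfold Nk at q1 q2 q3 ⊢; omega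

/-- two consecutive `τ`-edges `u-v-w` plus two consecutive `φ`-edges `w-z-u`. -/
lemma case22 {n : ℕ} (τ φ : Equiv.Perm (Fin n)) (u v w z : Fin n)
    (n1 : Nk (τ.symm u).val (τ.symm v).val 1)
    (n2 : Nk (τ.symm v).val (τ.symm w).val 1)
    (q1 : Nk (φ.symm w).val (φ.symm z).val 1)
    (q2 : Nk (φ.symm z).val (φ.symm u).val 1)
    (d1 : (τ.symm u).val ≠ (τ.symm w).val)
    (d2 : (φ.symm u).val ≠ (φ.symm w).val)
    (d3 : (φ.symm z).val ≠ (φ.symm v).val) :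
    Bad n (φ⁻¹ * τ) := by
  refine ⟨τ.symm u, τ.symm w, Or.inr (Or.inr ⟨?_, ?_, ?_⟩)⟩
  · unfold Nk at n1 n2 ⊢; omega
  · rw [fval, fval]; unfold Nk at q1 q2 ⊢; omega
  · intro r hr
    have hrb : r = τ.symm v := Fin.val_injective
      (show r.val = (τ.symm v).val by unfold Nk at n1 n2; omega)
    rw [hrb, fval, fval, fval]; unfold Nk at q1 q2; omega

set_option maxHeartbeats 1600000 in
lemma extract {n : ℕ} (τ φ : Equiv.Perm (Fin n)) (h : TwoPartFourCycle n τ φ) :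
    Bad n (φ⁻¹ * τ) := by
  obtain ⟨C, ⟨a, b, c, d, hab, hac, had, hbc, hbd, hcd, hC⟩, i, k, j, l, hCU⟩ := h
  have pne : ∀ u v : Fin n, u ≠ v → (τ.symm u).val ≠ (τ.symm v).val :=
    fun u v huv hval => huv (τ.symm.injective (Fin.val_injective hval))
  have qne : ∀ u v : Fin n, u ≠ v → (φ.symm u).val ≠ (φ.symm v).val :=
    fun u v huv hval => huv (φ.symm.injective (Fin.val_injective hval))
  have pab' := pne a b hab
  have pac' := pne a c hac
  have pad' := pne a d had
  have pbc' := pne b c hbc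
  have pbd' := pne b d hbd
  have pcd' := pne c d hcd
  have qab' := qne a b hab
  have qac' := qne a c hac
  have qad' := qne a d had
  have qbc' := qne b c hbc
  have qbd' := qne b d hbd
  have qcd' := qne c d hcd
  have hmem : ∀ u v : Fin n, s(u,v) ∈ C →
      s(u,v) ∈ consecEdges n τ i k ∨ s(u,v) ∈ consecEdges n φ j l := by
    intro u v huv; rw [hCU] at huv; exact huv
  have hAB := hmem a b (by rw [hC]; simp)
  have hBC := hmem b c (by rw [hC]; simp)
  have hCD := hmem c d (by rw [hC]; simp)
  have hDA := hmem d a (by rw [hC]; simp)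
  have hsubA : ∀ e ∈ consecEdges n τ i k,
      e = s(a,b) ∨ e = s(b,c) ∨ e = s(c,d) ∨ e = s(d,a) := by
    intro e he
    have : e ∈ C := by rw [hCU]; exact Set.mem_union_left _ he
    rw [hC] at this; simpa [Set.mem_insert_iff] using this
  clear hmem pne qne hab hac had hbc hbd hcd hC hCU
  clear C
  rcases hAB with hab1 | hab1 <;> rcases hBC with hbc1 | hbc1 <;>
    rcases hCD with hcd1 | hcd1 <;> rcases hDA with hda1 | hda1
  · -- AAAA : impossible
    exact (cyc_contra (padjN hab1) (padjN hbc1) (padjN hcd1) (padjN hda1) pac' pbd').elim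
  · -- AAAB
    exact case31 τ φ a b c d (padjN hab1) (padjN hbc1) (padjN hcd1) (padjN hda1)
      pac' pad' pbd'
  · -- AABA
    exact case31 τ φ d a b c (padjN hda1) (padjN hab1) (padjN hbc1) (padjN hcd1)
      (Ne.symm pbd') (Ne.symm pcd') pac' 
  · -- AABB
    exact case22 τ φ a b c d (padjN hab1) (padjN hbc1) (padjN hcd1) (padjN hda1)
      pac' qac' (Ne.symm qbd')
  · -- ABAA
    exact case31 τ φ c d a b (padjN hcd1) (padjN hda1) (padjN hab1) (padjN hbc1)
      (Ne.symm pac') (Ne.symm pbc') (Ne.symm pbd')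
  · -- ABAB : interval argument on τ
    rcases interval_helper pac' pad' pbc' pbd' hab1 hcd1 hsubA with hx | hx
    · exact case31 τ φ a b c d (padjN hab1) hx (padjN hcd1) (padjN hda1)
        pac' pad' pbd'
    · exact case31 τ φ c d a b (padjN hcd1) hx (padjN hab1) (padjN hbc1)
        (Ne.symm pac') (Ne.symm pbc') (Ne.symm pbd')
  · -- ABBA
    exact case22 τ φ d a b c (padjN hda1) (padjN hab1) (padjN hbc1) (padjN hcd1)
      (Ne.symm pbd') (Ne.symm qbd') (Ne.symm qac')
  · -- ABBB
    exact case13 τ φ a b c d (padjN hab1) (padjN hbc1) (padjN hcd1) (padjN hda1)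
      qbd' (Ne.symm qac') (Ne.symm qab')
  · -- BAAA
    exact case31 τ φ b c d a (padjN hbc1) (padjN hcd1) (padjN hda1) (padjN hab1)
      pbd' (Ne.symm pab') (Ne.symm pac')
  · -- BAAB
    exact case22 τ φ b c d a (padjN hbc1) (padjN hcd1) (padjN hda1) (padjN hab1)
      pbd' qbd' qac' 
  · -- BABA : interval argument on τ with rotated cycle
    have hsubA' : ∀ e ∈ consecEdges n τ i k,
        e = s(b,c) ∨ e = s(c,d) ∨ e = s(d,a) ∨ e = s(a,b) := by
      intro e he; rcases hsubA e he with h | h | h | h <;> tauto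
    rcases interval_helper pbd' (Ne.symm pab') pcd' (Ne.symm pac') hbc1 hda1 hsubA'
      with hx | hx
    · exact case31 τ φ b c d a (padjN hbc1) hx (padjN hda1) (padjN hab1)
        pbd' (Ne.symm pab') (Ne.symm pac')
    · exact case31 τ φ d a b c (padjN hda1) hx (padjN hbc1) (padjN hcd1)
        (Ne.symm pbd') (Ne.symm pcd') pac' 
  · -- BABB
    exact case13 τ φ b c d a (padjN hbc1) (padjN hcd1) (padjN hda1) (padjN hab1)
      (Ne.symm qac') (Ne.symm qbd') (Ne.symm qbc')
  · -- BBAA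
    exact case22 τ φ c d a b (padjN hcd1) (padjN hda1) (padjN hab1) (padjN hbc1)
      (Ne.symm pac') (Ne.symm qac') qbd' 
  · -- BBAB
    exact case13 τ φ c d a b (padjN hcd1) (padjN hda1) (padjN hab1) (padjN hbc1)
      (Ne.symm qbd') qac' (Ne.symm qcd')
  · -- BBBA
    exact case13 τ φ d a b c (padjN hda1) (padjN hab1) (padjN hbc1) (padjN hcd1)
      qac' qbd' qad' 
  · -- BBBB : impossible
    exact (cyc_contra (padjN hab1) (padjN hbc1) (padjN hcd1) (padjN hda1) qac' qbd').elim

end TwoPartAux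

/-- For `n` a multiple of 6, `M̂(n,4) ≤ n!/((n/6)!)³` : any family of Hamilton paths of
`K_n` such that the union of any two distinct members contains a two-part 4-cycle has
cardinality at most `n!/((n/6)!)³`. -/
theorem upper_bound_two_part_four_cycle_family (n : ℕ) (hn : 6 ∣ n)
    (F : Finset (Equiv.Perm (Fin n)))
    (hF : ∀ τ ∈ F, ∀ φ ∈ F, τ ≠ φ → TwoPartFourCycle n τ φ) :
    F.card ≤ Nat.factorial n / (Nat.factorial (n / 6)) ^ 3 := by
  obtain ⟨m, rfl⟩ := hn
  classical
  have hinj : ∀ x ∈ F, ∀ y ∈ F,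
      (QuotientGroup.mk x : _ ⧸ (TwoPartAux.Phi m).range) = QuotientGroup.mk y → x = y := by
    intro x hx y hy hxy
    by_contra hne
    have hmem : x⁻¹ * y ∈ (TwoPartAux.Phi m).range := QuotientGroup.eq.mp hxy
    have hmem2 : y⁻¹ * x ∈ (TwoPartAux.Phi m).range := by
      have := ((TwoPartAux.Phi m).range).inv_mem hmem
      simpa using this
    obtain ⟨g, hg⟩ := MonoidHom.mem_range.mp hmem2
    have hb : TwoPartAux.Bad (6 * m) (y⁻¹ * x) :=
      TwoPartAux.extract x y (hF x hx y hy hne)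
    rw [← hg] at hb
    exact TwoPartAux.safe m g hb
  have h1 : F.card ≤ Nat.card (Equiv.Perm (Fin (6 * m)) ⧸ (TwoPartAux.Phi m).range) := by
    rw [← Nat.card_eq_finsetCard]
    exact Nat.card_le_card_of_injective
      (fun x : {x // x ∈ F} =>
        (QuotientGroup.mk x.val : _ ⧸ (TwoPartAux.Phi m).range))
      (fun x y hxy => Subtype.ext (hinj x.val x.2 y.val y.2 hxy))
  have h2 : Nat.card (TwoPartAux.Phi m).range = (Nat.factorial m) ^ 3 := by
    rw [Nat.card_congr (MonoidHom.ofInjective (TwoPartAux.phi_injective m)).toEquiv.symm]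
    rw [Nat.card_pi]
    simp [Nat.card_eq_fintype_card, Fintype.card_perm, Fintype.card_fin]
  have h3 : Nat.card (Equiv.Perm (Fin (6 * m))) = Nat.factorial (6 * m) := by
    rw [Nat.card_eq_fintype_card, Fintype.card_perm, Fintype.card_fin]
  have h4 := Subgroup.card_eq_card_quotient_mul_card_subgroup (TwoPartAux.Phi m).range
  rw [h3, h2] at h4
  have h5 : 6 * m / 6 = m := by omega
  rw [h5]
  have hpos : 0 < (Nat.factorial m) ^ 3 := pow_pos (Nat.factorial_pos m) 3
  have h6 : Nat.factorial (6 * m) / (Nat.factorial m) ^ 3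
      = Nat.card (Equiv.Perm (Fin (6 * m)) ⧸ (TwoPartAux.Phi m).range) := by
    rw [h4, Nat.mul_div_cancel _ hpos]
  omega
end

section
/- Let A(n,4) be the maximum cardinality of a family of Hamilton paths of K_n such that the union of any two contains an alternating 4-cycle (a 4-cycle with two vertex-disjoint edges from each path), and let R(m) be the maximum size of a reversing family of permutations of [m]. Then A(n,4) ≥ 2^{⌊(n-2)/4⌋} · R(⌊n/2⌋). -/
/-- The union of the Hamilton paths `τ` and `φ` contains an alternating 4-cycle:
a 4-cycle `a b c d` with the two (vertex-disjoint) edges `ab`, `cd` from `τ` and the two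
(vertex-disjoint) edges `bc`, `da` from `φ`. -/
def AltFourCycle (n : ℕ) (τ φ : Equiv.Perm (Fin n)) : Prop :=
  ∃ a b c d : Fin n, a ≠ b ∧ a ≠ c ∧ a ≠ d ∧ b ≠ c ∧ b ≠ d ∧ c ≠ d ∧
    s(a, b) ∈ pathEdges n τ ∧ s(c, d) ∈ pathEdges n τ ∧
    s(b, c) ∈ pathEdges n φ ∧ s(d, a) ∈ pathEdges n φ

/-- A family `F` of permutations of `[m]` is reversing if for any two distinct members
`ρ, σ` there are positions `i ≠ j` with `ρ i = σ j` and `ρ j = σ i`. -/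
def Reversing (m : ℕ) (F : Finset (Equiv.Perm (Fin m))) : Prop :=
  ∀ ρ ∈ F, ∀ σ ∈ F, ρ ≠ σ → ∃ i j : Fin m, i ≠ j ∧ ρ i = σ j ∧ ρ j = σ i

/-- `R(m)`, the maximum cardinality of a reversing family of permutations of `[m]`. -/
noncomputable def R (m : ℕ) : ℕ :=
  sSup {k : ℕ | ∃ F : Finset (Equiv.Perm (Fin m)), Reversing m F ∧ F.card = k}

/-!
Split the vertices of `K_n` into the pairs `{2i, 2i+1}`, `i < ⌊n/2⌋`. A permutation `ρ` of the
pairs and a set `S` of pairs give the Hamilton path that visits `2i` and `2ρ(i)+1` at the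
positions `2i, 2i+1`, in the reverse order when `i ∈ S`; for odd `n` it ends at the last vertex.
Every such path contains the matching edges `{2i, 2ρ(i)+1}`. If `ρ(i) = σ(j)` and `ρ(j) = σ(i)`,
the matching edges of `ρ` and `σ` at `i` and `j` form an alternating 4-cycle. If two paths with
the same `ρ` differ in the orientation of pair `k+1` but not of pairs `k` and `k+2`, they differ
by swapping two adjacent positions, which gives an alternating 4-cycle on the positions
`2k+1, …, 2k+4`. Flipping only pairs `2s+1` with `s < ⌊(n-2)/4⌋` keeps flips non-adjacent, so a
maximum reversing family together with all these flip sets gives `2^⌊(n-2)/4⌋ · R(⌊n/2⌋)` paths,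
distinct because a path determines `ρ` and `S`.
-/

open Finset

theorem exists_reversing_card_eq_R (m : ℕ) :
    ∃ F : Finset (Equiv.Perm (Fin m)), Reversing m F ∧ F.card = R m := by
  have hne : {k | ∃ F : Finset (Equiv.Perm (Fin m)), Reversing m F ∧ F.card = k}.Nonempty :=
    ⟨0, ∅, by simp [Reversing]⟩
  have hbdd : BddAbove {k | ∃ F : Finset (Equiv.Perm (Fin m)), Reversing m F ∧ F.card = k} :=
    ⟨Fintype.card (Equiv.Perm (Fin m)), by rintro k ⟨F, -, rfl⟩; exact F.card_le_univ⟩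
  exact Nat.sSup_mem hne hbdd

section

variable {n t : ℕ}

theorem mem_pathEdges_of_val_eq_succ (τ : Equiv.Perm (Fin n)) {p q : Fin n}
    (h : q.val = p.val + 1) : s(τ p, τ q) ∈ pathEdges n τ := by
  obtain ⟨q, hq⟩ := q
  obtain rfl : q = p + 1 := h
  exact ⟨p, hq, rfl⟩

theorem altFourCycle_of_swap_middle {τ φ : Equiv.Perm (Fin n)} {p₀ p₁ p₂ p₃ : Fin n}
    (h₁ : p₁.val = p₀.val + 1) (h₂ : p₂.val = p₁.val + 1) (h₃ : p₃.val = p₂.val + 1)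
    (e₀ : τ p₀ = φ p₀) (e₁ : τ p₁ = φ p₂) (e₂ : τ p₂ = φ p₁) (e₃ : τ p₃ = φ p₃) :
    AltFourCycle n τ φ := by
  have hne {p q : Fin n} (h : p.val ≠ q.val) : τ p ≠ τ q := τ.injective.ne (Fin.ne_of_val_ne h)
  refine ⟨τ p₁, τ p₀, τ p₂, τ p₃, hne (by omega), hne (by omega), hne (by omega),
    hne (by omega), hne (by omega), hne (by omega), ?_, mem_pathEdges_of_val_eq_succ τ h₃, ?_, ?_⟩
  · rw [Sym2.eq_swap]; exact mem_pathEdges_of_val_eq_succ τ h₁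
  · rw [e₀, e₂]; exact mem_pathEdges_of_val_eq_succ φ h₁
  · rw [e₃, e₁, Sym2.eq_swap]; exact mem_pathEdges_of_val_eq_succ φ h₃

def evenVertex (i : Fin (n / 2)) : Fin n := ⟨2 * i, by omega⟩

def oddVertex (i : Fin (n / 2)) : Fin n := ⟨2 * i + 1, by omega⟩

def hamPathFun (ρ : Equiv.Perm (Fin (n / 2))) (S : Finset ℕ) (p : Fin n) : Fin n :=
  if h : (p : ℕ) / 2 < n / 2 then
    if (p : ℕ) % 2 = 1 ↔ (p : ℕ) / 2 ∈ S then evenVertex ⟨p / 2, h⟩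
    else oddVertex (ρ ⟨p / 2, h⟩)
  else p

theorem hamPathFun_injective (ρ : Equiv.Perm (Fin (n / 2))) (S : Finset ℕ) :
    Function.Injective (hamPathFun ρ S) := by
  intro p q h
  simp only [hamPathFun] at h
  split_ifs at h <;> simp only [evenVertex, oddVertex, Fin.ext_iff] at h ⊢
  all_goals first | omega | grind [Fin.val_inj, Equiv.apply_eq_iff_eq]

noncomputable def hamPath (ρ : Equiv.Perm (Fin (n / 2))) (S : Finset ℕ) : Equiv.Perm (Fin n) :=
  .ofBijective (hamPathFun ρ S) (Finite.injective_iff_bijective.mp (hamPathFun_injective ρ S))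

theorem hamPath_evenVertex (ρ : Equiv.Perm (Fin (n / 2))) (S : Finset ℕ) (i : Fin (n / 2)) :
    hamPath ρ S (evenVertex i) = if ↑i ∈ S then oddVertex (ρ i) else evenVertex i := by
  simp [hamPath, hamPathFun, evenVertex]

theorem hamPath_oddVertex (ρ : Equiv.Perm (Fin (n / 2))) (S : Finset ℕ) (i : Fin (n / 2)) :
    hamPath ρ S (oddVertex i) = if ↑i ∈ S then evenVertex i else oddVertex (ρ i) := by
  have hi : (2 * (i : ℕ) + 1) / 2 = i := by omega
  simp [hamPath, hamPathFun, oddVertex, hi]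

theorem pairEdge_mem_pathEdges (ρ : Equiv.Perm (Fin (n / 2))) (S : Finset ℕ)
    (i : Fin (n / 2)) : s(evenVertex i, oddVertex (ρ i)) ∈ pathEdges n (hamPath ρ S) := by
  have h := mem_pathEdges_of_val_eq_succ (hamPath ρ S) (p := evenVertex i) (q := oddVertex i) rfl
  rw [hamPath_evenVertex, hamPath_oddVertex] at h
  split_ifs at h
  · rwa [Sym2.eq_swap]
  · exact h

theorem hamPath_evenVertex_add_oddVertex (ρ : Equiv.Perm (Fin (n / 2))) (S : Finset ℕ)
    (i : Fin (n / 2)) :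
    (hamPath ρ S (evenVertex i) : ℕ) + hamPath ρ S (oddVertex i) = 2 * i + (2 * ρ i + 1) := by
  rw [hamPath_evenVertex, hamPath_oddVertex]
  split_ifs <;> simp only [evenVertex, oddVertex]; omega

theorem hamPath_evenVertex_odd_iff (ρ : Equiv.Perm (Fin (n / 2))) (S : Finset ℕ)
    (i : Fin (n / 2)) : (hamPath ρ S (evenVertex i) : ℕ) % 2 = 1 ↔ ↑i ∈ S := by
  rw [hamPath_evenVertex]
  split_ifs with h <;> simp only [evenVertex, oddVertex, h, iff_true, iff_false] <;> omega

theorem eq_of_hamPath_eq {ρ σ : Equiv.Perm (Fin (n / 2))} {S S' : Finset ℕ}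
    (h : hamPath ρ S = hamPath σ S') : ρ = σ ∧ ∀ i : Fin (n / 2), ↑i ∈ S ↔ ↑i ∈ S' := by
  refine ⟨Equiv.ext fun i => Fin.ext ?_, fun i => ?_⟩
  · have hρ := hamPath_evenVertex_add_oddVertex ρ S i
    have hσ := hamPath_evenVertex_add_oddVertex σ S' i
    rw [h] at hρ
    omega
  · rw [← hamPath_evenVertex_odd_iff ρ, ← hamPath_evenVertex_odd_iff σ, h]

theorem altFourCycle_hamPath_of_reversal {ρ σ : Equiv.Perm (Fin (n / 2))} (S S' : Finset ℕ)
    {i j : Fin (n / 2)} (hij : i ≠ j) (h₁ : ρ i = σ j) (h₂ : ρ j = σ i) :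
    AltFourCycle n (hamPath ρ S) (hamPath σ S') := by
  have hij' : (i : ℕ) ≠ j := Fin.val_ne_of_ne hij
  have hρ : (ρ i : ℕ) ≠ ρ j := Fin.val_ne_of_ne (ρ.injective.ne hij)
  refine ⟨oddVertex (ρ i), evenVertex i, oddVertex (ρ j), evenVertex j, ?_, ?_, ?_, ?_, ?_, ?_,
    ?_, ?_, ?_, ?_⟩
  any_goals simp only [ne_eq, evenVertex, oddVertex, Fin.ext_iff]; omega
  · rw [Sym2.eq_swap]; exact pairEdge_mem_pathEdges ρ S i
  · rw [Sym2.eq_swap]; exact pairEdge_mem_pathEdges ρ S j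
  · rw [h₂]; exact pairEdge_mem_pathEdges σ S' i
  · rw [h₁]; exact pairEdge_mem_pathEdges σ S' j

theorem altFourCycle_hamPath_of_flip (ρ : Equiv.Perm (Fin (n / 2))) {S S' : Finset ℕ}
    {k : ℕ} (hk : k + 2 < n / 2) (h₀ : k ∈ S ↔ k ∈ S') (h₁ : k + 1 ∈ S ↔ k + 1 ∉ S')
    (h₂ : k + 2 ∈ S ↔ k + 2 ∈ S') : AltFourCycle n (hamPath ρ S) (hamPath ρ S') := by
  refine altFourCycle_of_swap_middle (p₀ := oddVertex ⟨k, by omega⟩)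
    (p₁ := evenVertex ⟨k + 1, by omega⟩) (p₂ := oddVertex ⟨k + 1, by omega⟩)
    (p₃ := evenVertex ⟨k + 2, hk⟩) rfl rfl (by simp only [evenVertex, oddVertex]; omega)
    ?_ ?_ ?_ ?_ <;>
    simp only [hamPath_evenVertex, hamPath_oddVertex, h₀, h₁, h₂, ite_not]

def oddPairs (T : Finset (Fin t)) : Finset ℕ := T.image fun s : Fin t => 2 * (s : ℕ) + 1

theorem two_mul_add_one_mem_oddPairs {T : Finset (Fin t)} {s : Fin t} :
    2 * (s : ℕ) + 1 ∈ oddPairs T ↔ s ∈ T := by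
  simp [oddPairs, Fin.val_inj]

theorem two_mul_notMem_oddPairs (T : Finset (Fin t)) (k : ℕ) : 2 * k ∉ oddPairs T := by
  simp only [oddPairs, mem_image, not_exists, not_and]
  omega

theorem hamPath_oddPairs_injective (ht : t ≤ (n - 2) / 4) :
    Function.Injective fun x : Equiv.Perm (Fin (n / 2)) × Finset (Fin t) =>
      hamPath x.1 (oddPairs x.2) := by
  rintro ⟨ρ, T⟩ ⟨σ, T'⟩ h
  obtain ⟨rfl, hS⟩ := eq_of_hamPath_eq h
  refine Prod.ext rfl (Finset.ext fun s => ?_)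
  simpa only [two_mul_add_one_mem_oddPairs] using hS ⟨2 * s + 1, by omega⟩

theorem altFourCycle_hamPath_oddPairs_of_ne (ht : t ≤ (n - 2) / 4)
    (ρ : Equiv.Perm (Fin (n / 2))) {T T' : Finset (Fin t)} (hT : T ≠ T') :
    AltFourCycle n (hamPath ρ (oddPairs T)) (hamPath ρ (oddPairs T')) := by
  obtain ⟨s, hs⟩ : ∃ s, ¬(s ∈ T ↔ s ∈ T') := by
    by_contra! h
    exact hT (Finset.ext h)
  refine altFourCycle_hamPath_of_flip ρ (k := 2 * s) (by omega)
    (iff_of_false (two_mul_notMem_oddPairs _ _) (two_mul_notMem_oddPairs _ _)) ?_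
    (iff_of_false (two_mul_notMem_oddPairs _ (s + 1)) (two_mul_notMem_oddPairs _ (s + 1)))
  rw [two_mul_add_one_mem_oddPairs, two_mul_add_one_mem_oddPairs]
  tauto

end

/-- `A(n,4) ≥ 2^⌊(n-2)/4⌋ · R(⌊n/2⌋)` : there is a family of at least
`2^⌊(n-2)/4⌋ · R(⌊n/2⌋)` Hamilton paths of `K_n` such that the union of any two of them
contains an alternating 4-cycle. -/
theorem alt_four_cycle_family_lower_bound (n : ℕ) :
    ∃ F : Finset (Equiv.Perm (Fin n)),
      2 ^ ((n - 2) / 4) * R (n / 2) ≤ F.card ∧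
      ∀ τ ∈ F, ∀ φ ∈ F, τ ≠ φ → AltFourCycle n τ φ := by
  obtain ⟨F₀, hrev, hcard⟩ := exists_reversing_card_eq_R (n / 2)
  have hinj := hamPath_oddPairs_injective (n := n) (t := (n - 2) / 4) le_rfl
  refine ⟨(F₀ ×ˢ (univ : Finset (Finset (Fin ((n - 2) / 4))))).image
    fun x => hamPath x.1 (oddPairs x.2), ?_, ?_⟩
  · rw [card_image_of_injective _ hinj, card_product, card_univ, Fintype.card_finset,
      Fintype.card_fin, hcard, mul_comm]
  · simp only [mem_image, mem_product, mem_univ, and_true]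
    rintro _ ⟨⟨ρ, T⟩, hρ, rfl⟩ _ ⟨⟨σ, T'⟩, hσ, rfl⟩ hne
    by_cases hρσ : ρ = σ
    · subst hρσ
      exact altFourCycle_hamPath_oddPairs_of_ne le_rfl ρ fun hT => hne (by rw [hT])
    · obtain ⟨i, j, hij, h₁, h₂⟩ := hrev ρ hρ σ hσ hρσ
      exact altFourCycle_hamPath_of_reversal _ _ hij h₁ h₂
end
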